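/- For the vector field F₉ on ℝ³ given by F₉(x,y,z) = (−(λ+1)yz, λxy, xz) with λ ∈ ℝ, the function y ↦ y (second coordinate) is NOT in general a first integral, but the energy E(x,y,z) = x² + 2yz is a first integral: along any solution curve of F₉, d/dt [x(t)² + 2y(t)z(t)] = 0. -/

import Mathlib

/-- The geodesic field `F₉` of `Q₉` on `h(λ)`: `(−(λ+1)yz, λxy, xz)`. -/
def F9fam (l : ℝ) (v : Fin 3 → ℝ) : Fin 3 → ℝ :=
  ![-(l + 1) * v 1 * v 2, l * v 0 * v 1, v 0 * v 2]

/-! On the plane `z = 0` the field reduces to `(0, λxy, 0)`, so `x ≡ 1` and `y` grows like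
`exp (λt)`: for `λ ≠ 0` the coordinate `y` is not conserved. The energy `E = x² + 2yz` is
conserved because its gradient `(2x, 2z, 2y)` is orthogonal to `F₉`, the `λ`-terms cancelling. -/

open Real

theorem hasDerivAt_F9fam_exp_curve (l t : ℝ) :
    HasDerivAt (fun s => ![1, exp (l * s), 0]) (F9fam l ![1, exp (l * t), 0]) t := by
  refine hasDerivAt_pi.mpr fun i => ?_
  fin_cases i <;>
    simp only [F9fam, Fin.zero_eta, Fin.mk_one, Fin.reduceFinMk, Fin.isValue, Matrix.cons_val,
      Matrix.cons_val_zero, Matrix.cons_val_one, mul_zero, mul_one]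
  · exact hasDerivAt_const t 1
  · simpa [mul_comm] using (hasDerivAt_mul_const l).exp
  · exact hasDerivAt_const t 0

theorem exists_F9fam_solution_snd_ne {l : ℝ} (hl : l ≠ 0) :
    ∃ γ : ℝ → Fin 3 → ℝ, (∀ t, HasDerivAt γ (F9fam l (γ t)) t) ∧ γ 1 1 ≠ γ 0 1 := by
  refine ⟨_, hasDerivAt_F9fam_exp_curve l, ?_⟩
  simpa only [Matrix.cons_val_one, Matrix.cons_val_zero, mul_one, mul_zero, exp_zero, ne_eq,
    exp_eq_one_iff] using hl

theorem energy_grad_inner_F9fam (l : ℝ) (v : Fin 3 → ℝ) :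
    2 * v 0 * F9fam l v 0 + (2 * F9fam l v 1 * v 2 + 2 * v 1 * F9fam l v 2) = 0 := by
  simp only [F9fam, Matrix.cons_val_zero, Matrix.cons_val_one, Matrix.cons_val_two,
    Matrix.head_cons, Matrix.tail_cons]
  ring

theorem hasDerivAt_energy_of_hasDerivAt_F9fam {l t : ℝ} {γ : ℝ → Fin 3 → ℝ}
    (hγ : HasDerivAt γ (F9fam l (γ t)) t) :
    HasDerivAt (fun u => (γ u 0) ^ 2 + 2 * γ u 1 * γ u 2) 0 t := by
  have hcoord (i : Fin 3) := (hasDerivAt_pi.mp hγ) i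
  have h := ((hcoord 0).pow 2).add (((hcoord 1).const_mul 2).mul (hcoord 2))
  refine h.congr_deriv ?_
  rw [← energy_grad_inner_F9fam l (γ t)]
  norm_num

/-- For `F₉`, the second coordinate `y` is not in general a first integral,
but the energy `E = x² + 2yz` is: its derivative along any solution vanishes. -/
theorem stmt_4 :
    (¬ ∀ (l : ℝ) (γ : ℝ → Fin 3 → ℝ),
        (∀ t, HasDerivAt γ (F9fam l (γ t)) t) → ∀ t, γ t 1 = γ 0 1) ∧
    (∀ (l : ℝ) (γ : ℝ → Fin 3 → ℝ) (t : ℝ), HasDerivAt γ (F9fam l (γ t)) t →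
        HasDerivAt (fun u => (γ u 0) ^ 2 + 2 * γ u 1 * γ u 2) 0 t) := by
  refine ⟨fun hconserved => ?_, fun _ _ _ => hasDerivAt_energy_of_hasDerivAt_F9fam⟩
  obtain ⟨γ, hγ, hy⟩ := exists_F9fam_solution_snd_ne one_ne_zero
  exact hy (hconserved 1 γ hγ 1)
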